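/- Upper bound on hysteretic squashed entanglement by conditional mutual information given the spectator: For any state ρ_ABCD on H_A ⊗ H_B ⊗ H_C ⊗ H_D, T_sq(A;C|B)_ρ ≤ (1/2)·I(A;C|D)_ρ, where I(A;C|D)_ρ is the quantum conditional mutual information of the marginal ρ_ACD = tr_B(ρ_ABCD). -/

import Mathlib

open scoped ComplexOrder

/-- A density operator (quantum state): positive semidefinite with unit trace. -/
def IsDensity {d : Type*} [Fintype d] (ρ : Matrix d d ℂ) : Prop :=
  ρ.PosSemidef ∧ ρ.trace = 1

/-- Von Neumann entropy `S(ρ) = −tr(ρ log₂ ρ)`, computed via eigenvalues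
(with the convention `0 · log₂ 0 = 0`); junk value `0` on non-Hermitian input. -/
noncomputable def vnEntropy {d : Type*} [Fintype d] [DecidableEq d]
    (ρ : Matrix d d ℂ) : ℝ := by
  classical exact
    if h : ρ.IsHermitian then -∑ i, (h.eigenvalues i) * Real.logb 2 (h.eigenvalues i) else 0

/-- Quantum conditional mutual information `I(x;z|y)_ρ = S(xy) + S(yz) − S(y) − S(xyz)`
for a state on `x ⊗ y ⊗ z` (conditioning on the middle system `y`). -/
noncomputable def qcmi {x y z : Type*} [Fintype x] [Fintype y] [Fintype z]
    [DecidableEq x] [DecidableEq y] [DecidableEq z]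
    (ρ : Matrix (x × y × z) (x × y × z) ℂ) : ℝ :=
  vnEntropy (Matrix.of fun (p q : x × y) => ∑ c, ρ (p.1, p.2, c) (q.1, q.2, c))
  + vnEntropy (Matrix.of fun (p q : y × z) => ∑ a, ρ (a, p.1, p.2) (a, q.1, q.2))
  - vnEntropy (Matrix.of fun (b b' : y) => ∑ a, ∑ c, ρ (a, b, c) (a, b', c))
  - vnEntropy ρ

/-- For a state `σ` on `A ⊗ B ⊗ C ⊗ D ⊗ E`, the conditional mutual information
`I(A;C|BE)_σ`: the spectator `D` is traced out and `BE` is the conditioning system. -/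
noncomputable def qcmiACgivenBE {dA dB dC dD dE : Type*}
    [Fintype dA] [Fintype dB] [Fintype dC] [Fintype dD] [Fintype dE]
    [DecidableEq dA] [DecidableEq dB] [DecidableEq dC] [DecidableEq dE]
    (σ : Matrix ((dA × dB × dC × dD) × dE) ((dA × dB × dC × dD) × dE) ℂ) : ℝ :=
  qcmi (Matrix.of fun (p q : dA × (dB × dE) × dC) =>
    ∑ d : dD, σ ((p.1, p.2.1.1, p.2.2, d), p.2.1.2) ((q.1, q.2.1.1, q.2.2, d), q.2.1.2))

/-- Hysteretic squashed entanglement `T_sq(A;C|B)_ρ` of a state on `A ⊗ B ⊗ C ⊗ D`: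
half the infimum of `I(A;C|BE)_σ` over all state extensions `σ_ABCDE` of `ρ_ABCD`,
over all finite-dimensional extension systems `E`. -/
noncomputable def Tsq {dA dB dC dD : Type*}
    [Fintype dA] [Fintype dB] [Fintype dC] [Fintype dD]
    [DecidableEq dA] [DecidableEq dB] [DecidableEq dC] [DecidableEq dD]
    (ρ : Matrix (dA × dB × dC × dD) (dA × dB × dC × dD) ℂ) : ℝ :=
  sInf { t : ℝ | ∃ (nE : ℕ)
    (σ : Matrix ((dA × dB × dC × dD) × Fin nE) ((dA × dB × dC × dD) × Fin nE) ℂ),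
    IsDensity σ ∧ (Matrix.of fun p q => ∑ e, σ (p, e) (q, e)) = ρ ∧
    t = (1/2) * qcmiACgivenBE σ }

/-- For a state `σ` on `A ⊗ B ⊗ C ⊗ E`, the conditional mutual information
`I(A;C|BE)_σ` with conditioning system `BE`. -/
noncomputable def qcmi3 {dA dB dC dE : Type*}
    [Fintype dA] [Fintype dB] [Fintype dC] [Fintype dE]
    [DecidableEq dA] [DecidableEq dB] [DecidableEq dC] [DecidableEq dE]
    (σ : Matrix ((dA × dB × dC) × dE) ((dA × dB × dC) × dE) ℂ) : ℝ :=
  qcmi (Matrix.of fun (p q : dA × (dB × dE) × dC) =>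
    σ ((p.1, p.2.1.1, p.2.2), p.2.1.2) ((q.1, q.2.1.1, q.2.2), q.2.1.2))

/-- Squashed quantum non-Markovianity `N_sq(A;C|B)_ρ` of a state on `A ⊗ B ⊗ C`:
half the infimum of `I(A;C|BE)_σ` over all state extensions `σ_ABCE` of `ρ_ABC`. -/
noncomputable def Nsq {dA dB dC : Type*}
    [Fintype dA] [Fintype dB] [Fintype dC]
    [DecidableEq dA] [DecidableEq dB] [DecidableEq dC]
    (ρ : Matrix (dA × dB × dC) (dA × dB × dC) ℂ) : ℝ :=
  sInf { t : ℝ | ∃ (nE : ℕ)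
    (σ : Matrix ((dA × dB × dC) × Fin nE) ((dA × dB × dC) × Fin nE) ℂ),
    IsDensity σ ∧ (Matrix.of fun p q => ∑ e, σ (p, e) (q, e)) = ρ ∧
    t = (1/2) * qcmi3 σ }

/-- Choi matrix of a linear map on matrices. -/
noncomputable def choiMatrix {dX dY : Type*} [Fintype dX] [DecidableEq dX] [Fintype dY]
    (Φ : Matrix dX dX ℂ →ₗ[ℂ] Matrix dY dY ℂ) : Matrix (dX × dY) (dX × dY) ℂ :=
  Matrix.of fun p q => Φ (Matrix.single p.1 q.1 1) p.2 q.2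

/-- A quantum channel: completely positive (equivalently, PSD Choi matrix, by Choi's
theorem) and trace-preserving linear map. -/
def IsQuantumChannel {dX dY : Type*} [Fintype dX] [DecidableEq dX] [Fintype dY]
    (Φ : Matrix dX dX ℂ →ₗ[ℂ] Matrix dY dY ℂ) : Prop :=
  (choiMatrix Φ).PosSemidef ∧ ∀ ρ : Matrix dX dX ℂ, (Φ ρ).trace = ρ.trace

/-- `(Φ ⊗ id)` applied to an operator on `X ⊗ R`. -/
noncomputable def applyLeft {dX dY dR : Type*} [Fintype dX] [DecidableEq dX]
    (Φ : Matrix dX dX ℂ →ₗ[ℂ] Matrix dY dY ℂ)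
    (ρ : Matrix (dX × dR) (dX × dR) ℂ) : Matrix (dY × dR) (dY × dR) ℂ :=
  Matrix.of fun p q => ∑ a, ∑ a',
    Φ (Matrix.single a a' 1) p.1 q.1 * ρ (a, p.2) (a', q.2)

/-- `(id ⊗ Φ)` applied to an operator on `R ⊗ X`. -/
noncomputable def applyRight {dX dY dR : Type*} [Fintype dX] [DecidableEq dX]
    (Φ : Matrix dX dX ℂ →ₗ[ℂ] Matrix dY dY ℂ)
    (ρ : Matrix (dR × dX) (dR × dX) ℂ) : Matrix (dR × dY) (dR × dY) ℂ :=
  Matrix.of fun p q => ∑ x, ∑ x',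
    Φ (Matrix.single x x' 1) p.2 q.2 * ρ (p.1, x) (q.1, x')

/-- The square root of a positive semidefinite matrix, as `Matrix.PosSemidef.sqrt` was
defined in the older Mathlib (removed since). -/
noncomputable def Matrix.PosSemidef.sqrt {d : Type*} [Fintype d] [DecidableEq d]
    {A : Matrix d d ℂ} (hA : A.PosSemidef) : Matrix d d ℂ :=
  hA.1.eigenvectorUnitary.1 * Matrix.diagonal ((↑) ∘ (√·) ∘ hA.1.eigenvalues) *
    (star hA.1.eigenvectorUnitary : Matrix d d ℂ)

/-- Trace norm `‖X‖₁ = tr √(XᴴX)`. -/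
noncomputable def traceNorm {d : Type*} [Fintype d] [DecidableEq d]
    (X : Matrix d d ℂ) : ℝ :=
  ((Matrix.posSemidef_conjTranspose_mul_self X).sqrt.trace).re

/-- Fidelity `F(ρ,σ) = (tr|√ρ √σ|)²` (junk value `0` off the PSD cone). -/
noncomputable def fidelity {d : Type*} [Fintype d] [DecidableEq d]
    (ρ σ : Matrix d d ℂ) : ℝ := by
  classical exact
    if h : ρ.PosSemidef ∧ σ.PosSemidef then (traceNorm (h.1.sqrt * h.2.sqrt)) ^ 2 else 0

/-- Binary entropy (base 2), with `h₂(0) = h₂(1) = 0`. -/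
noncomputable def binEnt (p : ℝ) : ℝ :=
  -(p * Real.logb 2 p) - (1 - p) * Real.logb 2 (1 - p)

/-- ABC-marginal of the pure state `|v⟩⟨v|` on `A ⊗ B ⊗ C ⊗ D`. -/
noncomputable def pureMargABC {dA dB dC dD : Type*}
    [Fintype dA] [Fintype dB] [Fintype dC] [Fintype dD]
    (v : (dA × dB × dC × dD) → ℂ) : Matrix (dA × dB × dC) (dA × dB × dC) ℂ :=
  Matrix.of fun p q =>
    ∑ d, v (p.1, p.2.1, p.2.2, d) * (starRingEnd ℂ) (v (q.1, q.2.1, q.2.2, d))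

/-- Convex-roof extension of QCMI: `co(QCMI)[ρ_ABCD]` is half the infimum of
`Σ_i p_i I(A;C|B)_{ψ^i}` over finite pure-state ensembles `{p_i, ψ^i}` for `ρ`. -/
noncomputable def coQCMI {dA dB dC dD : Type*}
    [Fintype dA] [Fintype dB] [Fintype dC] [Fintype dD]
    [DecidableEq dA] [DecidableEq dB] [DecidableEq dC] [DecidableEq dD]
    (ρ : Matrix (dA × dB × dC × dD) (dA × dB × dC × dD) ℂ) : ℝ :=
  sInf { t : ℝ | ∃ (k : ℕ) (p : Fin k → ℝ) (v : Fin k → (dA × dB × dC × dD) → ℂ),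
    (∀ i, 0 ≤ p i) ∧ (∑ i, p i) = 1 ∧
    (∀ i, ∑ a, v i a * (starRingEnd ℂ) (v i a) = 1) ∧
    ρ = ∑ i, (p i : ℂ) • Matrix.of (fun a b => v i a * (starRingEnd ℂ) (v i b)) ∧
    t = (1/2) * ∑ i, p i * qcmi (pureMargABC (v i)) }

/-!
Purify `ρ_ABCD` to a pure state `ψ` on `ABCDE` and take `ψ` itself as the extension. For a
pure state, complementary marginals have the same entropy (they are the Gram matrices `W Wᴴ` and
`(Wᴴ W)ᵀ`, whose nonzero spectra agree), so
`I(A;C|BE)_ψ = S(ABE) + S(BCE) - S(BE) - S(ABCE) = S(CD) + S(AD) - S(ACD) - S(D) = I(A;C|D)_ρ`.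

The set whose infimum defines `T_sq` is bounded below, because `I(A;C|Y) ≥ -2 log|A|` for every
conditioning system `Y`: the conditional entropy `S(A|Y)` lies in `[-log|A|, log|A|]`. The upper
bound is Klein's inequality against `𝟙/|A| ⊗ ρ_Y`; the lower bound follows from it by
purification.
-/

open Matrix
open scoped Kronecker

section Spectral

open Polynomial

variable {m n : Type*} [Fintype m] [DecidableEq m] [Fintype n] [DecidableEq n]

theorem roots_X_pow_mul_charpoly (k : ℕ) (M : Matrix m m ℂ) :
    (X ^ k * M.charpoly).roots = Multiset.replicate k 0 + M.charpoly.roots := by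
  rw [roots_mul (mul_ne_zero (pow_ne_zero _ X_ne_zero) M.charpoly_monic.ne_zero), roots_pow,
    roots_X, Multiset.nsmul_singleton]

theorem vnEntropy_eq_neg_sum_roots {M : Matrix m m ℂ} (hM : M.IsHermitian) :
    vnEntropy M = -(M.charpoly.roots.map fun z => z.re * Real.logb 2 z.re).sum := by
  rw [vnEntropy, dif_pos hM, hM.roots_charpoly_eq_eigenvalues, Multiset.map_map,
    Finset.sum_eq_multiset_sum]
  rfl

theorem vnEntropy_eq_of_X_pow_mul_charpoly_eq {M : Matrix m m ℂ} {N : Matrix n n ℂ}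
    (hM : M.IsHermitian) (hN : N.IsHermitian) {a b : ℕ}
    (h : X ^ a * M.charpoly = X ^ b * N.charpoly) : vnEntropy M = vnEntropy N := by
  have := congrArg (fun p : ℂ[X] => (p.roots.map fun z => z.re * Real.logb 2 z.re).sum) h
  simp only [roots_X_pow_mul_charpoly, Multiset.map_add, Multiset.sum_add, Multiset.map_replicate,
    Multiset.sum_replicate, Complex.zero_re, zero_mul, smul_zero, zero_add] at this
  rw [vnEntropy_eq_neg_sum_roots hM, vnEntropy_eq_neg_sum_roots hN, this]

end Spectral

section PureState

variable {m n : Type*} [Fintype n]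

/-- `tr_n |ψ⟩⟨ψ|`. -/
def pureMarg (ψ : m × n → ℂ) : Matrix m m ℂ :=
  Matrix.of fun i i' => ∑ j, ψ (i, j) * star (ψ (i', j))

theorem pureMarg_eq_mul_conjTranspose (ψ : m × n → ℂ) :
    pureMarg ψ = Matrix.of (fun i j => ψ (i, j)) * (Matrix.of fun i j => ψ (i, j))ᴴ := by
  ext; simp [pureMarg, mul_apply]

variable [Fintype m]

theorem posSemidef_pureMarg (ψ : m × n → ℂ) : (pureMarg ψ).PosSemidef := by
  rw [pureMarg_eq_mul_conjTranspose]; exact posSemidef_self_mul_conjTranspose _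

theorem trace_pureMarg (ψ : m × n → ℂ) : (pureMarg ψ).trace = ∑ u, ψ u * star (ψ u) := by
  simp [pureMarg, trace, Fintype.sum_prod_type]

theorem IsDensity.pureMarg_swap {ψ : m × n → ℂ} (hψ : IsDensity (pureMarg ψ)) :
    IsDensity (pureMarg (ψ ∘ Prod.swap)) := by
  refine ⟨posSemidef_pureMarg _, ?_⟩
  rw [← hψ.2, trace_pureMarg, trace_pureMarg, ← (Equiv.prodComm m n).sum_comp]
  rfl

theorem vnEntropy_pureMarg_swap [DecidableEq m] [DecidableEq n] (ψ : m × n → ℂ) :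
    vnEntropy (pureMarg (ψ ∘ Prod.swap)) = vnEntropy (pureMarg ψ) := by
  let W : Matrix m n ℂ := Matrix.of fun i j => ψ (i, j)
  have hswap : pureMarg (ψ ∘ Prod.swap) = (Wᴴ * W)ᵀ := by
    ext; simp [pureMarg, W, mul_apply, mul_comm]
  have hcharpoly : (pureMarg (ψ ∘ Prod.swap)).charpoly = (Wᴴ * W).charpoly := by
    rw [hswap, charpoly_transpose]
  refine vnEntropy_eq_of_X_pow_mul_charpoly_eq (posSemidef_pureMarg _).1
    (posSemidef_pureMarg _).1 (a := Fintype.card m) (b := Fintype.card n) ?_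
  rw [hcharpoly, pureMarg_eq_mul_conjTranspose, charpoly_mul_comm']

end PureState

theorem exists_pureMarg_eq {d : Type*} [Fintype d] {M : Matrix d d ℂ} (hM : M.PosSemidef) :
    ∃ (k : ℕ) (ψ : d × Fin k → ℂ), pureMarg ψ = M := by
  obtain ⟨k, v, rfl⟩ := posSemidef_iff_eq_sum_vecMulVec.mp hM
  exact ⟨k, fun u => v u.2 u.1, by ext; simp [pureMarg, Matrix.sum_apply, vecMulVec_apply]⟩

theorem IsDensity.marginal {α β γ : Type*} [Fintype α] [Fintype β] [Fintype γ]
    {σ : Matrix α α ℂ} (hσ : IsDensity σ) (e : β × γ ≃ α) :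
    IsDensity (Matrix.of fun p q : β => ∑ d : γ, σ (e (p, d)) (e (q, d))) := by
  refine ⟨?_, ?_⟩
  · have h : (Matrix.of fun p q : β => ∑ d : γ, σ (e (p, d)) (e (q, d))) =
        ∑ d : γ, σ.submatrix (fun p => e (p, d)) (fun p => e (p, d)) := by
      ext; simp [Matrix.sum_apply]
    rw [h]
    exact posSemidef_sum _ fun d _ => hσ.1.submatrix _
  · rw [← hσ.2, trace, trace, ← e.sum_comp, Fintype.sum_prod_type]
    rfl

theorem IsDensity.nonempty {d : Type*} [Fintype d] {M : Matrix d d ℂ} (hM : IsDensity M) :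
    Nonempty d := by
  by_contra h
  rw [not_nonempty_iff] at h
  simpa [trace] using hM.2

theorem IsDensity.sum_eigenvalues {d : Type*} [Fintype d] [DecidableEq d] {M : Matrix d d ℂ}
    (hM : IsDensity M) : ∑ i, hM.1.1.eigenvalues i = 1 := by
  obtain ⟨hpsd, htr⟩ := hM
  have h := hpsd.1.trace_eq_sum_eigenvalues
  rw [htr] at h
  simpa using (congrArg Complex.re h).symm

section Klein

theorem map_normSq_mem_doublyStochastic {n : Type*} [Fintype n] [DecidableEq n]
    {T : Matrix n n ℂ} (hT : T ∈ unitaryGroup n ℂ) :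
    T.map Complex.normSq ∈ doublyStochastic ℝ n := by
  have hrow (i : n) : ∑ j, Complex.normSq (T i j) = 1 := by
    have h := congr_fun₂ ((mem_unitaryGroup_iff).mp hT) i i
    simp only [mul_apply, star_apply, RCLike.star_def, Complex.mul_conj, one_apply_eq] at h
    exact_mod_cast h
  have hcol (j : n) : ∑ i, Complex.normSq (T i j) = 1 := by
    have h := congr_fun₂ ((mem_unitaryGroup_iff').mp hT) j j
    simp only [mul_apply, star_apply, RCLike.star_def, mul_comm (starRingEnd ℂ _),
      Complex.mul_conj, one_apply_eq] at h
    exact_mod_cast h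
  exact mem_doublyStochastic_iff_sum.mpr ⟨fun _ _ => Complex.normSq_nonneg _, hrow, hcol⟩

theorem mul_logb_sub_logb_le {a b : ℝ} (ha : 0 ≤ a) (hb : 0 < b) :
    a * (Real.logb 2 b - Real.logb 2 a) ≤ (b - a) / Real.log 2 := by
  rcases ha.eq_or_lt with rfl | ha
  · simp only [zero_mul, sub_zero]; positivity
  rw [← Real.logb_div hb.ne' ha.ne', Real.logb, mul_div_assoc', div_le_div_iff_of_pos_right
    (Real.log_pos one_lt_two)]
  calc a * Real.log (b / a) ≤ a * (b / a - 1) :=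
        mul_le_mul_of_nonneg_left (Real.log_le_sub_one_of_pos (div_pos hb ha)) ha.le
    _ = b - a := by field_simp

/-- Bounding each term by `log t ≤ t - 1`, the double stochasticity of `c` makes the bounds add
up to `∑ q - 1 ≤ 0`. -/
theorem vecMul_mul_logb_le_of_mem_doublyStochastic {ι : Type*} [Fintype ι] [DecidableEq ι]
    {c : Matrix ι ι ℝ} (hc : c ∈ doublyStochastic ℝ ι) {p q : ι → ℝ}
    (hp : ∀ i, 0 ≤ p i) (hp1 : ∑ i, p i = 1) (hq : ∀ j, 0 ≤ q j) (hq1 : ∑ j, q j ≤ 1)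
    (hsupp : ∀ j, q j = 0 → (p ᵥ* c) j = 0) :
    ∑ j, (p ᵥ* c) j * Real.logb 2 (q j) ≤ ∑ i, p i * Real.logb 2 (p i) := by
  obtain ⟨hc0, hrow, hcol⟩ := mem_doublyStochastic_iff_sum.mp hc
  have hterm (i j : ι) : p i * c i j * (Real.logb 2 (q j) - Real.logb 2 (p i)) ≤
      (c i j * q j - p i * c i j) / Real.log 2 := by
    rcases (hq j).eq_or_lt with hqj | hqj
    · have : p i * c i j = 0 := by
        have h := hsupp j hqj.symm
        simp only [vecMul, dotProduct] at h
        exact (Finset.sum_eq_zero_iff_of_nonneg fun i _ => mul_nonneg (hp i) (hc0 i j)).mp h i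
          (Finset.mem_univ i)
      rw [this, zero_mul, ← hqj]; simp
    · calc p i * c i j * (Real.logb 2 (q j) - Real.logb 2 (p i))
          = c i j * (p i * (Real.logb 2 (q j) - Real.logb 2 (p i))) := by ring
        _ ≤ c i j * ((q j - p i) / Real.log 2) :=
          mul_le_mul_of_nonneg_left (mul_logb_sub_logb_le (hp i) hqj) (hc0 i j)
        _ = (c i j * q j - p i * c i j) / Real.log 2 := by ring
  have hsum : ∑ i, ∑ j, (c i j * q j - p i * c i j) = ∑ j, q j - 1 := by
    simp only [Finset.sum_sub_distrib, ← Finset.mul_sum, hrow, mul_one, hp1]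
    rw [Finset.sum_comm]
    simp only [← Finset.sum_mul, hcol, one_mul]
  have key : ∑ i, ∑ j, p i * c i j * (Real.logb 2 (q j) - Real.logb 2 (p i)) ≤ 0 :=
    calc _ ≤ ∑ i, ∑ j, (c i j * q j - p i * c i j) / Real.log 2 :=
          Finset.sum_le_sum fun i _ => Finset.sum_le_sum fun j _ => hterm i j
      _ = (∑ j, q j - 1) / Real.log 2 := by simp only [← hsum, Finset.sum_div]
      _ ≤ 0 := div_nonpos_of_nonpos_of_nonneg (by linarith) (Real.log_nonneg one_le_two)
  have hleft : ∑ j, (p ᵥ* c) j * Real.logb 2 (q j) =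
      ∑ i, ∑ j, p i * c i j * Real.logb 2 (q j) := by
    simp only [vecMul, dotProduct, Finset.sum_mul]; exact Finset.sum_comm
  have hright : ∑ i, p i * Real.logb 2 (p i) = ∑ i, ∑ j, p i * c i j * Real.logb 2 (p i) := by
    refine Finset.sum_congr rfl fun i _ => ?_
    rw [← Finset.sum_mul, ← Finset.mul_sum, hrow, mul_one]
  simp only [mul_sub, Finset.sum_sub_distrib] at key
  linarith

variable {d : Type*} [Fintype d] [DecidableEq d]

theorem diag_conjTranspose_mul_mul_eq_vecMul {M : Matrix d d ℂ} (hM : M.IsHermitian)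
    (V : Matrix d d ℂ) (j : d) :
    (Vᴴ * M * V) j j = (hM.eigenvalues ᵥ*
      ((hM.eigenvectorUnitary : Matrix d d ℂ)ᴴ * V).map Complex.normSq) j := by
  set T := (hM.eigenvectorUnitary : Matrix d d ℂ)ᴴ * V
  have hT : Vᴴ * M * V = Tᴴ * diagonal (RCLike.ofReal ∘ hM.eigenvalues) * T := by
    conv_lhs => rw [hM.spectral_theorem, Unitary.conjStarAlgAut_apply]
    simp only [T, conjTranspose_mul, conjTranspose_conjTranspose, star_eq_conjTranspose,
      Matrix.mul_assoc]
  rw [hT, mul_apply]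
  simp only [mul_diagonal, conjTranspose_apply, vecMul, dotProduct, map_apply, Complex.ofReal_sum,
    Complex.ofReal_mul, Function.comp_apply, RCLike.ofReal_eq_complex_ofReal]
  refine Finset.sum_congr rfl fun i _ => ?_
  rw [← Complex.mul_conj, RCLike.star_def, mul_comm (T i j)]
  ring

/-- Klein's inequality `S(M) ≤ -tr (M log₂ Q)` for `Q = V diag(q) Vᴴ`. -/
theorem vnEntropy_le_neg_sum_diag_mul_logb {M : Matrix d d ℂ} (hM : IsDensity M)
    {V : Matrix d d ℂ} (hV : V ∈ unitaryGroup d ℂ) {q : d → ℝ} (hq : ∀ j, 0 ≤ q j)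
    (hq1 : ∑ j, q j ≤ 1) (hsupp : ∀ j, q j = 0 → (Vᴴ * M * V) j j = 0) :
    vnEntropy M ≤ -∑ j, ((Vᴴ * M * V) j j).re * Real.logb 2 (q j) := by
  have hH := hM.1.1
  have hc : ((hH.eigenvectorUnitary : Matrix d d ℂ)ᴴ * V).map Complex.normSq ∈
      doublyStochastic ℝ d :=
    map_normSq_mem_doublyStochastic (mul_mem (Unitary.star_mem hH.eigenvectorUnitary.2) hV)
  simp only [diag_conjTranspose_mul_mul_eq_vecMul hH, Complex.ofReal_re] at hsupp ⊢
  rw [vnEntropy, dif_pos hH, neg_le_neg_iff]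
  exact vecMul_mul_logb_le_of_mem_doublyStochastic hc hM.1.eigenvalues_nonneg
    hM.sum_eigenvalues hq hq1 fun j hj => by exact_mod_cast hsupp j hj

end Klein

section ConditionalEntropy

variable {X Y : Type*} [Fintype X] [DecidableEq X] [Fintype Y]

theorem sum_conj_one_kronecker_apply (M : Matrix (X × Y) (X × Y) ℂ) (W : Matrix Y Y ℂ)
    (j j' : Y) :
    ∑ x, (((1 : Matrix X X ℂ) ⊗ₖ W)ᴴ * M * ((1 : Matrix X X ℂ) ⊗ₖ W)) (x, j) (x, j')
      = (Wᴴ * (Matrix.of fun y y' => ∑ x, M (x, y) (x, y')) * W) j j' := by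
  simp [mul_apply, one_apply, Fintype.sum_prod_type, Finset.sum_mul, Finset.mul_sum, ite_mul,
    apply_ite (starRingEnd ℂ)]
  rw [Finset.sum_comm]
  exact Finset.sum_congr rfl fun _ _ => Finset.sum_comm

variable [DecidableEq Y]

/-- Klein's inequality against `𝟙/|X| ⊗ M_Y`, which is diagonal in the basis
`eₓ ⊗ (eigenvectors of M_Y)`. -/
theorem vnEntropy_le_logb_card_add_vnEntropy_marginal {M : Matrix (X × Y) (X × Y) ℂ}
    (hM : IsDensity M) :
    vnEntropy M ≤ Real.logb 2 (Fintype.card X) +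
      vnEntropy (Matrix.of fun y y' => ∑ x, M (x, y) (x, y')) := by
  have hY : IsDensity (Matrix.of fun y y' => ∑ x, M (x, y) (x, y')) :=
    hM.marginal (Equiv.prodComm Y X)
  have : Nonempty X := ⟨hM.nonempty.some.1⟩
  have hcard : (0 : ℝ) < Fintype.card X := by exact_mod_cast Fintype.card_pos
  set m := hY.1.1.eigenvalues
  let V : Matrix (X × Y) (X × Y) ℂ := 1 ⊗ₖ (hY.1.1.eigenvectorUnitary : Matrix Y Y ℂ)
  have hV : V ∈ unitaryGroup (X × Y) ℂ :=
    kronecker_mem_unitary (one_mem _) hY.1.1.eigenvectorUnitary.2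
  set D := Vᴴ * M * V
  have hD : D.PosSemidef := hM.1.conjTranspose_mul_mul_same V
  have hDsum (j : Y) : ∑ x, D (x, j) (x, j) = m j := by
    have hUU : (hY.1.1.eigenvectorUnitary : Matrix Y Y ℂ)ᴴ * hY.1.1.eigenvectorUnitary = 1 :=
      (mem_unitaryGroup_iff').mp hY.1.1.eigenvectorUnitary.2
    rw [sum_conj_one_kronecker_apply, diag_conjTranspose_mul_mul_eq_vecMul hY.1.1, hUU]
    simp [m]
  have hDzero (p : X × Y) (hp : m p.2 = 0) : D p p = 0 := by
    have h : ∑ x, D (x, p.2) (x, p.2) = 0 := by rw [hDsum, hp, Complex.ofReal_zero]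
    exact (Finset.sum_eq_zero_iff_of_nonneg fun x _ => hD.diag_nonneg).mp h p.1
      (Finset.mem_univ _)
  have hre (j : Y) : ∑ x, (D (x, j) (x, j)).re = m j := by
    rw [← Complex.re_sum, hDsum, Complex.ofReal_re]
  have hterm (p : X × Y) : (D p p).re * Real.logb 2 (m p.2 / Fintype.card X) =
      (D p p).re * Real.logb 2 (m p.2) - (D p p).re * Real.logb 2 (Fintype.card X) := by
    by_cases hp : m p.2 = 0
    · simp [hDzero p hp]
    · rw [Real.logb_div hp hcard.ne', mul_sub]
  refine (vnEntropy_le_neg_sum_diag_mul_logb hM hV (q := fun p => m p.2 / Fintype.card X)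
    (fun p => div_nonneg (hY.1.eigenvalues_nonneg _) hcard.le) ?_ ?_).trans_eq ?_
  · simp [Fintype.sum_prod_type, ← Finset.sum_div, hY.sum_eigenvalues, m, hcard.ne']
  · exact fun p hp => hDzero p (by simpa [hcard.ne'] using hp)
  · have hlog : ∑ p : X × Y, (D p p).re * Real.logb 2 (m p.2) =
        ∑ j, m j * Real.logb 2 (m j) := by
      rw [Fintype.sum_prod_type, Finset.sum_comm]
      simp only [← Finset.sum_mul, hre]
    have hone : ∑ p : X × Y, (D p p).re = 1 := by
      rw [Fintype.sum_prod_type, Finset.sum_comm]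
      simp only [hre]
      exact hY.sum_eigenvalues
    rw [vnEntropy, dif_pos hY.1.1, Finset.sum_congr rfl fun p _ => hterm p,
      Finset.sum_sub_distrib, ← Finset.sum_mul, hlog, hone]
    ring

/-- With `ψ` purifying `M` through `R`: `S(Y) = S(XR) ≤ log|X| + S(R) = log|X| + S(XY)`. -/
theorem vnEntropy_marginal_le_logb_card_add_vnEntropy {M : Matrix (X × Y) (X × Y) ℂ}
    (hM : IsDensity M) :
    vnEntropy (Matrix.of fun y y' => ∑ x, M (x, y) (x, y')) ≤
      Real.logb 2 (Fintype.card X) + vnEntropy M := by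
  obtain ⟨k, ψ, rfl⟩ := exists_pureMarg_eq hM.1
  let φ : (X × Fin k) × Y → ℂ := fun u => ψ ((u.1.1, u.2), u.1.2)
  have hφ : (Matrix.of fun y y' => ∑ x, pureMarg ψ (x, y) (x, y')) =
      pureMarg (φ ∘ Prod.swap) := by
    ext; simp [pureMarg, φ, Fintype.sum_prod_type]
  have hφψ : (Matrix.of fun e e' => ∑ x, pureMarg φ (x, e) (x, e')) =
      pureMarg (ψ ∘ Prod.swap) := by
    ext; simp [pureMarg, φ, Fintype.sum_prod_type]
  have hdens : IsDensity (pureMarg φ) := by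
    refine IsDensity.pureMarg_swap (ψ := φ ∘ Prod.swap) ?_
    rw [← hφ]
    exact hM.marginal (Equiv.prodComm Y X)
  rw [hφ, vnEntropy_pureMarg_swap, ← vnEntropy_pureMarg_swap ψ, ← hφψ]
  exact vnEntropy_le_logb_card_add_vnEntropy_marginal hdens

end ConditionalEntropy

theorem neg_two_mul_logb_card_le_qcmi {x y z : Type*} [Fintype x] [Fintype y] [Fintype z]
    [DecidableEq x] [DecidableEq y] [DecidableEq z] {τ : Matrix (x × y × z) (x × y × z) ℂ}
    (hτ : IsDensity τ) : -2 * Real.logb 2 (Fintype.card x) ≤ qcmi τ := by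
  have hxyz : vnEntropy τ ≤ Real.logb 2 (Fintype.card x) +
      vnEntropy (Matrix.of fun (p q : y × z) => ∑ a, τ (a, p.1, p.2) (a, q.1, q.2)) :=
    vnEntropy_le_logb_card_add_vnEntropy_marginal hτ
  have hy := vnEntropy_marginal_le_logb_card_add_vnEntropy
    (M := Matrix.of fun (p q : x × y) => ∑ c, τ (p.1, p.2, c) (q.1, q.2, c))
    (hτ.marginal (Equiv.prodAssoc x y z))
  simp only [of_apply] at hy
  rw [qcmi]
  linarith

/-- For a pure state on `x ⊗ y ⊗ z ⊗ w`, `I(x;z|y) = I(x;z|w)`. -/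
theorem qcmi_pureMarg_swap_conditioning {x y z w : Type*}
    [Fintype x] [Fintype y] [Fintype z] [Fintype w]
    [DecidableEq x] [DecidableEq y] [DecidableEq z] [DecidableEq w]
    (ψ : (x × y × z) × w → ℂ) :
    qcmi (pureMarg ψ) =
      qcmi (pureMarg fun u : (x × w × z) × y => ψ ((u.1.1, u.2, u.1.2.2), u.1.2.1)) := by
  have key : ∀ a b c d a' b' c' d' : ℝ, a = b' → b = a' → c = d' → d = c' →
      a + b - c - d = a' + b' - c' - d' := by
    intros; linarith
  rw [qcmi, qcmi]
  refine key _ _ _ _ _ _ _ _ ?_ ?_ ?_ ?_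
  · convert (vnEntropy_pureMarg_swap
      fun u : (x × y) × (w × z) => ψ ((u.1.1, u.1.2, u.2.2), u.2.1)).symm using 2 <;> ext <;>
      simp [pureMarg, Fintype.sum_prod_type]
    exact Finset.sum_comm
  · convert (vnEntropy_pureMarg_swap
      fun u : (y × z) × (x × w) => ψ ((u.2.1, u.1.1, u.1.2), u.2.2)).symm using 2 <;> ext <;>
      simp [pureMarg, Fintype.sum_prod_type]
    exact Finset.sum_comm
  · convert (vnEntropy_pureMarg_swap
      fun u : y × (x × w × z) => ψ ((u.2.1, u.1, u.2.2.2), u.2.2.1)).symm using 2 <;> ext <;>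
      simp [pureMarg, Fintype.sum_prod_type]
    exact Finset.sum_congr rfl fun _ _ => Finset.sum_comm
  · convert (vnEntropy_pureMarg_swap ψ).symm using 2
    ext
    simp [pureMarg, Fintype.sum_prod_type]
    exact Finset.sum_congr rfl fun _ _ => Finset.sum_comm

theorem neg_two_mul_logb_card_le_qcmiACgivenBE {dA dB dC dD dE : Type*}
    [Fintype dA] [Fintype dB] [Fintype dC] [Fintype dD] [Fintype dE]
    [DecidableEq dA] [DecidableEq dB] [DecidableEq dC] [DecidableEq dE]
    {σ : Matrix ((dA × dB × dC × dD) × dE) ((dA × dB × dC × dD) × dE) ℂ}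
    (hσ : IsDensity σ) : -2 * Real.logb 2 (Fintype.card dA) ≤ qcmiACgivenBE σ :=
  neg_two_mul_logb_card_le_qcmi (τ := Matrix.of fun (p q : dA × (dB × dE) × dC) =>
      ∑ d : dD, σ ((p.1, p.2.1.1, p.2.2, d), p.2.1.2) ((q.1, q.2.1.1, q.2.2, d), q.2.1.2))
    (hσ.marginal ⟨fun u => ((u.1.1, u.1.2.1.1, u.1.2.2, u.2), u.1.2.1.2),
      fun v => ((v.1.1, (v.1.2.1, v.2), v.1.2.2.1), v.1.2.2.2), fun _ => rfl, fun _ => rfl⟩)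

theorem Tsq_le_of_isExtension {dA dB dC dD : Type*}
    [Fintype dA] [Fintype dB] [Fintype dC] [Fintype dD]
    [DecidableEq dA] [DecidableEq dB] [DecidableEq dC] [DecidableEq dD]
    {ρ : Matrix (dA × dB × dC × dD) (dA × dB × dC × dD) ℂ} {nE : ℕ}
    {σ : Matrix ((dA × dB × dC × dD) × Fin nE) ((dA × dB × dC × dD) × Fin nE) ℂ}
    (hσ : IsDensity σ) (hσρ : (Matrix.of fun p q => ∑ e, σ (p, e) (q, e)) = ρ) :
    Tsq ρ ≤ (1/2) * qcmiACgivenBE σ := by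
  refine csInf_le ⟨-Real.logb 2 (Fintype.card dA), ?_⟩ ⟨nE, σ, hσ, hσρ, rfl⟩
  rintro t ⟨nE', σ', hσ', -, rfl⟩
  linarith [neg_two_mul_logb_card_le_qcmiACgivenBE hσ']

/-- **Upper bound by the conditional mutual information given the spectator:**
`T_sq(A;C|B)_ρ ≤ (1/2) I(A;C|D)_ρ`, where `I(A;C|D)` is the QCMI of the marginal
`ρ_ACD = tr_B(ρ_ABCD)` (conditioning on `D`). -/
theorem Tsq_le_half_qcmi_spectator {dA dB dC dD : Type*}
    [Fintype dA] [Fintype dB] [Fintype dC] [Fintype dD]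
    [DecidableEq dA] [DecidableEq dB] [DecidableEq dC] [DecidableEq dD]
    (ρ : Matrix (dA × dB × dC × dD) (dA × dB × dC × dD) ℂ) (hρ : IsDensity ρ) :
    Tsq ρ ≤ (1/2) * qcmi (Matrix.of fun (p q : dA × dD × dC) =>
      ∑ b, ρ (p.1, b, p.2.2, p.2.1) (q.1, b, q.2.2, q.2.1)) := by
  obtain ⟨k, ψ, hψ⟩ := exists_pureMarg_eq hρ.1
  have hσ : IsDensity (vecMulVec ψ (star ψ)) := by
    refine ⟨posSemidef_vecMulVec_self_star ψ, ?_⟩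
    rw [← hρ.2, ← hψ, trace_pureMarg]
    rfl
  have hσρ : (Matrix.of fun p q => ∑ e, vecMulVec ψ (star ψ) (p, e) (q, e)) = ρ := hψ
  have hspectator : (pureMarg fun u : (dA × dD × dC) × (dB × Fin k) =>
      ψ ((u.1.1, u.2.1, u.1.2.2, u.1.2.1), u.2.2)) =
      Matrix.of fun (p q : dA × dD × dC) =>
        ∑ b, ρ (p.1, b, p.2.2, p.2.1) (q.1, b, q.2.2, q.2.1) := by
    ext; simp [← hψ, pureMarg, Fintype.sum_prod_type]
  calc Tsq ρ ≤ (1/2) * qcmiACgivenBE (vecMulVec ψ (star ψ)) := Tsq_le_of_isExtension hσ hσρ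
    _ = (1/2) * qcmi (pureMarg fun u : (dA × (dB × Fin k) × dC) × dD =>
          ψ ((u.1.1, u.1.2.1.1, u.1.2.2, u.2), u.1.2.1.2)) := rfl
    _ = _ := by rw [qcmi_pureMarg_swap_conditioning, ← hspectator]
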